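/- Let H be a closed subset of the graph group G_F and let x, y ∈ G. If x ≤ y, then min(xH) ≤ min(yH), where min(xH) and min(yH) denote the unique minimal elements of the sets xH and yH with respect to ≤ (which exist since H is convex and translates of convex sets are convex). -/

import Mathlib

open Pointwise

namespace GraphGroupPaper

/-- The set of commutator relators: `gᵢ` and `gⱼ` commute for every pair of distinct
`i, j` with `{i,j} ∉ F`. -/
def Rels (k : ℕ) (F : Set (Sym2 (Fin k))) : Set (FreeGroup (Fin k)) :=
  {w | ∃ i j : Fin k, i ≠ j ∧ s(i, j) ∉ F ∧
      w = FreeGroup.of i * FreeGroup.of j * (FreeGroup.of i)⁻¹ * (FreeGroup.of j)⁻¹}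

/-- The graph group `G_F` with generators `g₁, …, g_k` and relations `gᵢgⱼ = gⱼgᵢ`
for all distinct `i, j` with `{i,j} ∉ F`. -/
abbrev Grp (k : ℕ) (F : Set (Sym2 (Fin k))) := PresentedGroup (Rels k F)

/-- The generator `gᵢ` of the graph group. -/
def gen (k : ℕ) (F : Set (Sym2 (Fin k))) (i : Fin k) : Grp k F :=
  PresentedGroup.of i

/-- The group element corresponding to a symbol: `(i, true)` stands for `gᵢ`,
`(i, false)` stands for `gᵢ⁻¹`. -/
def sym (k : ℕ) (F : Set (Sym2 (Fin k))) (α : Fin k × Bool) : Grp k F :=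
  if α.2 then gen k F α.1 else (gen k F α.1)⁻¹

/-- The product of the word `l` of symbols, as an element of the graph group. -/
def wordProd (k : ℕ) (F : Set (Sym2 (Fin k))) (l : List (Fin k × Bool)) : Grp k F :=
  (l.map (sym k F)).prod

/-- `|x|` : the length of a shortest word in the symbols representing `x`. -/
noncomputable def len {k : ℕ} {F : Set (Sym2 (Fin k))} (x : Grp k F) : ℕ :=
  sInf {n | ∃ l : List (Fin k × Bool), wordProd k F l = x ∧ l.length = n}

/-- The partial order on `G_F`:  `x ≤ y` iff `|y| = |x| + |x⁻¹y|`. -/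
def le {k : ℕ} {F : Set (Sym2 (Fin k))} (x y : Grp k F) : Prop :=
  len y = len x + len (x⁻¹ * y)

/-- `m` is the meet `x ∧ y` (greatest lower bound w.r.t. `le`). -/
def IsMeet {k : ℕ} {F : Set (Sym2 (Fin k))} (x y m : Grp k F) : Prop :=
  le m x ∧ le m y ∧ ∀ w, le w x → le w y → le w m

/-- `j` is the (finite) join `x ∨ y` (least upper bound w.r.t. `le`);
`x ∨ y` is finite iff such a `j` exists. -/
def IsJoin {k : ℕ} {F : Set (Sym2 (Fin k))} (x y j : Grp k F) : Prop :=
  le x j ∧ le y j ∧ ∀ w, le x w → le y w → le j w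

/-- `j` is the (finite) join of the set `S`. -/
def IsJoinSet {k : ℕ} {F : Set (Sym2 (Fin k))} (S : Set (Grp k F)) (j : Grp k F) : Prop :=
  (∀ s ∈ S, le s j) ∧ ∀ w, (∀ s ∈ S, le s w) → le j w

/-- `y` is a segment of `a` if `a = x·y·z` for some `x, z`. -/
def Segment {k : ℕ} {F : Set (Sym2 (Fin k))} (y a : Grp k F) : Prop :=
  ∃ x z, a = x * y * z ∧ len a = len x + len y + len z

/-- The left-invariant metric `dist(x,y) = |x⁻¹y|`. -/
noncomputable def dist {k : ℕ} {F : Set (Sym2 (Fin k))} (x y : Grp k F) : ℕ :=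
  len (x⁻¹ * y)

/-- A nonempty set `L` is convex if `x, z ∈ L` and `dist(x,y) + dist(y,z) = dist(x,z)`
imply `y ∈ L`. -/
def ConvexSet {k : ℕ} {F : Set (Sym2 (Fin k))} (L : Set (Grp k F)) : Prop :=
  L.Nonempty ∧ ∀ x z y : Grp k F, x ∈ L → z ∈ L →
    dist x y + dist y z = dist x z → y ∈ L

/-- An ideal: nonempty, downward closed, and closed under finite joins. -/
def IdealSet {k : ℕ} {F : Set (Sym2 (Fin k))} (I : Set (Grp k F)) : Prop :=
  I.Nonempty ∧ (∀ x ∈ I, ∀ y, le y x → y ∈ I) ∧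
    (∀ x ∈ I, ∀ y ∈ I, ∀ j, IsJoin x y j → j ∈ I)

/-- `H` is closed if both `H` and `H⁻¹` are ideals. -/
def ClosedSet {k : ℕ} {F : Set (Sym2 (Fin k))} (H : Set (Grp k F)) : Prop :=
  IdealSet H ∧ IdealSet H⁻¹

/-- `m` is a minimal element of `S` w.r.t. `le`. -/
def MinimalIn {k : ℕ} {F : Set (Sym2 (Fin k))} (S : Set (Grp k F)) (m : Grp k F) : Prop :=
  m ∈ S ∧ ∀ x ∈ S, le x m → x = m

/-- `l` is a reduced (i.e. shortest) word representing `x`. -/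
def MinWord {k : ℕ} {F : Set (Sym2 (Fin k))} (x : Grp k F) (l : List (Fin k × Bool)) : Prop :=
  wordProd k F l = x ∧ l.length = len x

open Classical in
/-- `#_α(x)`: the number of occurrences of the symbol `α` (not counting `α⁻¹`)
in a reduced word representing `x`. -/
noncomputable def symCount {k : ℕ} {F : Set (Sym2 (Fin k))} (α : Fin k × Bool)
    (x : Grp k F) : ℕ :=
  if h : ∃ l, MinWord x l then h.choose.count α else 0

/-- The symbol `α` occurs in `x`. -/
def Occurs {k : ℕ} {F : Set (Sym2 (Fin k))} (α : Fin k × Bool) (x : Grp k F) : Prop :=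
  0 < symCount α x

/-- `α` is a maximal symbol of `x`, i.e. `xα⁻¹ ≤ x`. -/
def MaxSym {k : ℕ} {F : Set (Sym2 (Fin k))} (α : Fin k × Bool) (x : Grp k F) : Prop :=
  le (x * (sym k F α)⁻¹) x

/-- A peak: an element with precisely one maximal symbol. -/
def IsPeak {k : ℕ} {F : Set (Sym2 (Fin k))} (p : Grp k F) : Prop :=
  ∃! α : Fin k × Bool, MaxSym α p

/-- An `α`-peak: a peak whose unique maximal symbol is `α`. -/
def AlphaPeak {k : ℕ} {F : Set (Sym2 (Fin k))} (α : Fin k × Bool) (p : Grp k F) : Prop :=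
  MaxSym α p ∧ ∀ β, MaxSym β p → β = α

/-- The set of generator indices occurring in `b`. -/
def Support {k : ℕ} {F : Set (Sym2 (Fin k))} (b : Grp k F) : Set (Fin k) :=
  {i | Occurs (i, true) b ∨ Occurs (i, false) b}

/-- `b` is connected: the generators occurring in `b` induce a connected subgraph of
the graph `([k], F)`. -/
def Conn {k : ℕ} {F : Set (Sym2 (Fin k))} (b : Grp k F) : Prop :=
  (SimpleGraph.induce (Support b) (SimpleGraph.fromEdgeSet F)).Connected

/-- `b` is cyclically reduced: `b ∧ b⁻¹ = 1`. -/
def CycRed {k : ℕ} {F : Set (Sym2 (Fin k))} (b : Grp k F) : Prop :=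
  IsMeet b b⁻¹ 1

/-!
Left multiplication by a letter acts on reduced words up to swapping adjacent commuting
letters: the letter is either cancelled against the first occurrence of its inverse that can be
moved to the front, or prepended. This action of `G_F` computes `|x|` and shows that two distinct
initial letters of `x` commute and stay initial after removing either one. By induction on length
this gives meets of arbitrary pairs, joins of bounded pairs, and the diamond identity
`c⁻¹ (b ∨ c) = (b ∧ c)⁻¹ b`.

For the theorem, downward closure of `H` forces `m ≤ x` and `m' ≤ y`. Put `w = m ∧ m'`. Since
`z ↦ y⁻¹ z` reverses the order below `y`, the diamond identity below `y⁻¹` expresses `x⁻¹ w` as the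
join of `x⁻¹ m ∈ H` and `d⁻¹ (y⁻¹ m')` with `d ≤ y⁻¹ m' ∈ H`; the latter lies in `H` because
`H⁻¹` is downward closed. Hence `w ∈ xH`, and minimality of `m` gives `m = w ≤ m'`.
-/

variable {k : ℕ} {F : Set (Sym2 (Fin k))}

section Words

variable {l : List (Fin k × Bool)} {x : Grp k F}

def symInv (a : Fin k × Bool) : Fin k × Bool := (a.1, !a.2)

@[simp] lemma symInv_symInv (a : Fin k × Bool) : symInv (symInv a) = a := by
  simp [symInv]

@[simp] lemma symInv_fst (a : Fin k × Bool) : (symInv a).1 = a.1 := rfl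

lemma symInv_injective : Function.Injective (symInv (k := k)) :=
  Function.LeftInverse.injective symInv_symInv

@[simp] lemma sym_symInv (a : Fin k × Bool) : sym k F (symInv a) = (sym k F a)⁻¹ := by
  cases a with | mk i b => cases b <;> simp [sym, symInv]

@[simp] lemma wordProd_nil : wordProd k F [] = 1 := rfl

@[simp] lemma wordProd_cons (a : Fin k × Bool) (l : List (Fin k × Bool)) :
    wordProd k F (a :: l) = sym k F a * wordProd k F l := by
  simp [wordProd]

@[simp] lemma wordProd_append (l₁ l₂ : List (Fin k × Bool)) :
    wordProd k F (l₁ ++ l₂) = wordProd k F l₁ * wordProd k F l₂ := by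
  simp [wordProd]

lemma wordProd_reverse_map_symInv (l : List (Fin k × Bool)) :
    wordProd k F (l.map symInv).reverse = (wordProd k F l)⁻¹ := by
  induction l with
  | nil => simp
  | cons a t ih => simp [ih]

lemma exists_wordProd_eq (x : Grp k F) : ∃ l, wordProd k F l = x := by
  have hx : x ∈ Subgroup.closure (Set.range PresentedGroup.of) := by
    rw [PresentedGroup.closure_range_of]; trivial
  induction hx using Subgroup.closure_induction with
  | mem _ hg =>
    obtain ⟨i, rfl⟩ := hg
    exact ⟨[(i, true)], by simp [sym, gen]⟩
  | one => exact ⟨[], rfl⟩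
  | mul _ _ _ _ h₁ h₂ =>
    obtain ⟨l₁, rfl⟩ := h₁
    obtain ⟨l₂, rfl⟩ := h₂
    exact ⟨l₁ ++ l₂, wordProd_append l₁ l₂⟩
  | inv _ _ h =>
    obtain ⟨l, rfl⟩ := h
    exact ⟨_, wordProd_reverse_map_symInv l⟩

lemma exists_minWord (x : Grp k F) : ∃ l, MinWord x l := by
  obtain ⟨l, hl⟩ := exists_wordProd_eq x
  exact Nat.sInf_mem (s := {n | ∃ l, wordProd k F l = x ∧ l.length = n}) ⟨l.length, l, hl, rfl⟩

lemma len_le_length (h : wordProd k F l = x) : len x ≤ l.length :=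
  Nat.sInf_le ⟨l, h, rfl⟩

@[simp] lemma len_one : len (1 : Grp k F) = 0 :=
  Nat.le_zero.mp (len_le_length wordProd_nil)

lemma len_eq_zero : len x = 0 ↔ x = 1 := by
  refine ⟨fun h => ?_, by rintro rfl; exact len_one⟩
  obtain ⟨l, hl, hlen⟩ := exists_minWord x
  rw [h, List.length_eq_zero_iff] at hlen
  simpa [hlen] using hl.symm

lemma len_mul_le (x y : Grp k F) : len (x * y) ≤ len x + len y := by
  obtain ⟨lx, rfl, hx⟩ := exists_minWord x
  obtain ⟨ly, rfl, hy⟩ := exists_minWord y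
  simpa [← hx, ← hy] using len_le_length (wordProd_append (F := F) lx ly)

@[simp] lemma len_inv (x : Grp k F) : len x⁻¹ = len x := by
  have key : ∀ y : Grp k F, len y⁻¹ ≤ len y := fun y => by
    obtain ⟨l, rfl, hl⟩ := exists_minWord y
    simpa [← hl] using len_le_length (wordProd_reverse_map_symInv (F := F) l)
  exact le_antisymm (key x) (by simpa using key x⁻¹)

lemma len_le_len_add_len_inv_mul (x y : Grp k F) : len y ≤ len x + len (x⁻¹ * y) := by
  simpa using len_mul_le x (x⁻¹ * y)

end Words

section Parity

lemma lift_eq_one_of_mem_rels {G : Type*} [CommGroup G] (f : Fin k → G) :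
    ∀ r ∈ Rels k F, FreeGroup.lift f r = 1 := by
  rintro r ⟨i, j, -, -, rfl⟩
  simp only [map_mul, map_inv, FreeGroup.lift_apply_of]
  rw [mul_comm (f i)]
  group

noncomputable def parity : Grp k F →* Multiplicative (ZMod 2) :=
  PresentedGroup.toGroup (lift_eq_one_of_mem_rels fun _ => Multiplicative.ofAdd 1)

@[simp] lemma parity_sym (a : Fin k × Bool) :
    parity (sym k F a) = Multiplicative.ofAdd (1 : ZMod 2) := by
  have hgen : parity (gen k F a.1) = Multiplicative.ofAdd (1 : ZMod 2) :=
    PresentedGroup.toGroup.of _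
  cases a with | mk i b =>
  cases b
  · simp only [sym, Bool.false_eq_true, if_false, map_inv, hgen]; decide
  · simpa [sym] using hgen

lemma parity_wordProd (l : List (Fin k × Bool)) :
    parity (wordProd k F l) = Multiplicative.ofAdd (l.length : ZMod 2) := by
  induction l with
  | nil => rfl
  | cons a t ih =>
    rw [wordProd_cons, map_mul, parity_sym, ih, ← ofAdd_add, List.length_cons, Nat.cast_succ,
      add_comm]

lemma parity_eq_ofAdd_len (x : Grp k F) : parity x = Multiplicative.ofAdd (len x : ZMod 2) := by
  obtain ⟨l, rfl, hl⟩ := exists_minWord x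
  rw [parity_wordProd, hl]

lemma sym_ne_one (a : Fin k × Bool) : sym k F a ≠ 1 := by
  intro h
  have := parity_sym (F := F) a
  rw [h, map_one] at this
  exact absurd (Multiplicative.ofAdd.injective this.symm) (by decide)

lemma len_sym (a : Fin k × Bool) : len (sym k F a) = 1 := by
  have hle : len (sym k F a) ≤ 1 := len_le_length (l := [a]) (by simp)
  have hne : len (sym k F a) ≠ 0 := fun h => sym_ne_one a (len_eq_zero.mp h)
  omega

/-- Parity forbids `len (sym a * x) = len x`. -/
lemma len_sym_mul (a : Fin k × Bool) (x : Grp k F) :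
    len (sym k F a * x) = len x + 1 ∨ len x = len (sym k F a * x) + 1 := by
  have hle : len (sym k F a * x) ≤ len x + 1 := by
    simpa [len_sym, add_comm] using len_mul_le (sym k F a) x
  have hge : len x ≤ len (sym k F a * x) + 1 := by
    simpa [len_sym, add_comm] using len_le_len_add_len_inv_mul (sym k F a)⁻¹ x
  have hne : len (sym k F a * x) ≠ len x := fun h => by
    have hp := parity_eq_ofAdd_len (sym k F a * x)
    rw [map_mul, parity_sym, parity_eq_ofAdd_len, h, ← ofAdd_add] at hp
    exact absurd (Multiplicative.ofAdd.injective hp) (by simp)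
  omega

end Parity

section Order

variable {a c d v x y z : Grp k F}

lemma le.len_le (h : le x y) : len x ≤ len y := by
  unfold le at h; omega

lemma le.len_inv_mul (h : le x y) : len (x⁻¹ * y) = len y - len x := by
  unfold le at h; omega

lemma le.len_inv_mul_rev (h : le x y) : len (y⁻¹ * x) = len y - len x := by
  rw [← len_inv, mul_inv_rev, inv_inv, h.len_inv_mul]

lemma le.refl (x : Grp k F) : le x x := by simp [le]

lemma one_le (x : Grp k F) : le 1 x := by simp [le]

lemma le_one_iff : le x 1 ↔ x = 1 := by
  refine ⟨fun h => len_eq_zero.mp ?_, by rintro rfl; exact le.refl 1⟩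
  simpa using h.len_le

lemma le.trans (h₁ : le x y) (h₂ : le y z) : le x z := by
  have hxz : len (x⁻¹ * z) ≤ len (x⁻¹ * y) + len (y⁻¹ * z) := by
    simpa [mul_assoc] using len_mul_le (x⁻¹ * y) (y⁻¹ * z)
  have := len_le_len_add_len_inv_mul x z
  unfold le at *
  omega

lemma le.antisymm (h₁ : le x y) (h₂ : le y x) : x = y := by
  have : len (x⁻¹ * y) = 0 := by unfold le at *; omega
  exact inv_mul_eq_one.mp (len_eq_zero.mp this)

lemma le.len_mul (hd : le d x) (hv : le v (d⁻¹ * x)) : len (d * v) = len d + len v := by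
  have := len_le_len_add_len_inv_mul (d * v) x
  have := len_mul_le d v
  rw [mul_inv_rev, mul_assoc, hv.len_inv_mul] at *
  have := hv.len_le
  unfold le at hd
  omega

lemma le.mul_le (hd : le d x) (hv : le v (d⁻¹ * x)) : le (d * v) x := by
  have := hv.len_le
  have hlen := hd.len_mul hv
  unfold le at hd ⊢
  rw [mul_inv_rev, mul_assoc, hv.len_inv_mul, hlen]
  omega

lemma le.le_mul (hd : le d x) (hv : le v (d⁻¹ * x)) : le d (d * v) := by
  unfold le
  rw [hd.len_mul hv, inv_mul_cancel_left]

lemma le.inv_mul_le_inv_mul (hca : le c a) (hax : le a x) : le (c⁻¹ * a) (c⁻¹ * x) := by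
  have hcx := hca.trans hax
  unfold le
  rw [mul_inv_rev, inv_inv, mul_assoc, mul_inv_cancel_left, hca.len_inv_mul, hcx.len_inv_mul,
    hax.len_inv_mul]
  have := hca.len_le; have := hax.len_le
  omega

lemma le_of_inv_mul_le_inv_mul (hca : le c a) (hcx : le c x)
    (h : le (c⁻¹ * a) (c⁻¹ * x)) : le a x := by
  unfold le at h ⊢
  rw [mul_inv_rev, inv_inv, mul_assoc, mul_inv_cancel_left, hca.len_inv_mul,
    hcx.len_inv_mul] at h
  have := hca.len_le; have := hcx.len_le
  omega

lemma le.inv_mul_antitone (hca : le c a) (hax : le a x) : le (x⁻¹ * a) (x⁻¹ * c) := by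
  have hcx := hca.trans hax
  have hsymm : len (a⁻¹ * c) = len (c⁻¹ * a) := by rw [← len_inv]; group
  unfold le
  rw [mul_inv_rev, inv_inv, mul_assoc, mul_inv_cancel_left, hsymm, hca.len_inv_mul,
    hax.len_inv_mul_rev, hcx.len_inv_mul_rev]
  have := hca.len_le; have := hax.len_le
  omega

lemma le.inv_mul_le_inv (h : le d x) : le (x⁻¹ * d) x⁻¹ := by
  have hsymm : len (x⁻¹ * d) = len (d⁻¹ * x) := by rw [← len_inv]; group
  unfold le
  rw [mul_inv_rev, inv_inv, mul_inv_cancel_right, hsymm, h.len_inv_mul, len_inv, len_inv]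
  have := h.len_le
  omega

lemma mul_le_of_le_inv (h : le v x⁻¹) : le (x * v) x := by
  simpa using h.inv_mul_le_inv

end Order

section StartsWith

variable {a : Fin k × Bool} {v x : Grp k F}

/-- `x` has a reduced word beginning with the letter `a`. -/
def StartsWith (a : Fin k × Bool) (x : Grp k F) : Prop := le (sym k F a) x

lemma startsWith_iff : StartsWith a x ↔ len ((sym k F a)⁻¹ * x) + 1 = len x := by
  unfold StartsWith le
  rw [len_sym]
  omega

lemma len_inv_mul_of_not_startsWith (h : ¬ StartsWith a x) :
    len ((sym k F a)⁻¹ * x) = len x + 1 := by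
  rw [← sym_symInv]
  refine (len_sym_mul (symInv a) x).resolve_right fun h' => h (startsWith_iff.mpr ?_)
  rw [← sym_symInv]
  omega

lemma exists_startsWith (h : x ≠ 1) : ∃ a, StartsWith a x := by
  obtain ⟨l, hl, hlen⟩ := exists_minWord x
  obtain _ | ⟨a, t⟩ := l
  · exact absurd hl.symm h
  refine ⟨a, startsWith_iff.mpr (le_antisymm ?_ ?_)⟩
  · have : (sym k F a)⁻¹ * x = wordProd k F t := by rw [← hl, wordProd_cons, inv_mul_cancel_left]
    have := len_le_length this.symm
    simp only [List.length_cons] at hlen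
    omega
  · simpa [len_sym, add_comm] using len_le_len_add_len_inv_mul (sym k F a) x

lemma StartsWith.of_le (h : StartsWith a v) (hv : le v x) : StartsWith a x := le.trans h hv

end StartsWith

section SymCommute

variable {a b : Fin k × Bool}

def SymCommute (F : Set (Sym2 (Fin k))) (a b : Fin k × Bool) : Prop :=
  a.1 ≠ b.1 ∧ s(a.1, b.1) ∉ F

lemma SymCommute.symm (h : SymCommute F a b) : SymCommute F b a :=
  ⟨h.1.symm, by rw [Sym2.eq_swap]; exact h.2⟩

@[simp] lemma symCommute_symInv_right : SymCommute F a (symInv b) ↔ SymCommute F a b := Iff.rfl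

@[simp] lemma symCommute_symInv_left : SymCommute F (symInv a) b ↔ SymCommute F a b := Iff.rfl

lemma SymCommute.ne_symInv (h : SymCommute F a b) : b ≠ symInv a :=
  fun he => h.1 (by rw [he, symInv_fst])

lemma SymCommute.ne (h : SymCommute F a b) : a ≠ b :=
  fun he => h.1 (by rw [he])

lemma gen_commute {i j : Fin k} (hij : i ≠ j) (hF : s(i, j) ∉ F) :
    Commute (gen k F i) (gen k F j) := by
  have h := PresentedGroup.one_of_mem (rels := Rels k F) ⟨i, j, hij, hF, rfl⟩
  simp only [map_mul, map_inv] at h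
  exact commutatorElement_eq_one_iff_commute.mp h

lemma SymCommute.commute (h : SymCommute F a b) : Commute (sym k F a) (sym k F b) := by
  have base := gen_commute h.1 h.2
  cases a with | mk i s =>
  cases b with | mk j t =>
  cases s <;> cases t <;> simp only [sym, Bool.false_eq_true, if_true, if_false]
  exacts [base.inv_left.inv_right, base.inv_left, base.inv_right, base]

lemma SymCommute.inv_mul_inv_mul (h : SymCommute F a b) (x : Grp k F) :
    (sym k F a)⁻¹ * ((sym k F b)⁻¹ * x) = (sym k F b)⁻¹ * ((sym k F a)⁻¹ * x) := by
  rw [← mul_assoc, h.commute.inv_inv.eq, mul_assoc]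

lemma SymCommute.inv_mul_sym_mul (h : SymCommute F a b) (x : Grp k F) :
    (sym k F b)⁻¹ * (sym k F a * x) = sym k F a * ((sym k F b)⁻¹ * x) := by
  rw [← mul_assoc, h.symm.commute.inv_left.eq, mul_assoc]

end SymCommute

section Cancel

variable {a b c d : Fin k × Bool} {l l' l₁ l₂ t : List (Fin k × Bool)}

open Classical in
noncomputable def cancel (F : Set (Sym2 (Fin k))) (a : Fin k × Bool) :
    List (Fin k × Bool) → Option (List (Fin k × Bool))
  | [] => none
  | b :: t =>
    if b = symInv a then some t
    else if SymCommute F a b then (cancel F a t).map (b :: ·) else none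

@[simp] lemma cancel_nil : cancel F a [] = none := by rw [cancel]

lemma cancel_cons_of_eq (h : b = symInv a) : cancel F a (b :: t) = some t := by
  rw [cancel, if_pos h]

lemma cancel_cons_of_symCommute (h : SymCommute F a b) :
    cancel F a (b :: t) = (cancel F a t).map (b :: ·) := by
  rw [cancel, if_neg h.ne_symInv, if_pos h]

lemma cancel_cons_of_not (h₁ : b ≠ symInv a) (h₂ : ¬ SymCommute F a b) :
    cancel F a (b :: t) = none := by
  rw [cancel, if_neg h₁, if_neg h₂]

lemma cancel_cons_eq_some (h : b ≠ symInv a) :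
    cancel F a (b :: t) = some l' ↔
      SymCommute F a b ∧ ∃ t', cancel F a t = some t' ∧ b :: t' = l' := by
  by_cases hab : SymCommute F a b
  · simp [cancel_cons_of_symCommute hab, hab]
  · simp [cancel_cons_of_not h hab, hab]

lemma cancel_cons_eq_none (h : b ≠ symInv a) :
    cancel F a (b :: t) = none ↔ (SymCommute F a b → cancel F a t = none) := by
  by_cases hab : SymCommute F a b
  · simp [cancel_cons_of_symCommute hab, hab]
  · simp [cancel_cons_of_not h hab, hab]

lemma exists_eq_append_of_cancel_eq_some (h : cancel F a l = some l') :
    ∃ p q, l = p ++ symInv a :: q ∧ l' = p ++ q ∧ ∀ e ∈ p, SymCommute F a e := by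
  induction l generalizing l' with
  | nil => simp at h
  | cons b t ih =>
    by_cases hb : b = symInv a
    · rw [cancel_cons_of_eq hb, Option.some_inj] at h
      exact ⟨[], t, by simp [hb], h.symm, by simp⟩
    obtain ⟨hab, t', ht', rfl⟩ := (cancel_cons_eq_some hb).mp h
    obtain ⟨p, q, rfl, rfl, hp⟩ := ih ht'
    exact ⟨b :: p, q, rfl, rfl, by simpa [hab] using hp⟩

lemma length_of_cancel_eq_some (h : cancel F a l = some l') : l'.length + 1 = l.length := by
  obtain ⟨p, q, rfl, rfl, -⟩ := exists_eq_append_of_cancel_eq_some h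
  simp; omega

lemma sym_mul_wordProd_of_cancel_eq_some (h : cancel F a l = some l') :
    sym k F a * wordProd k F l = wordProd k F l' := by
  obtain ⟨p, q, rfl, rfl, hp⟩ := exists_eq_append_of_cancel_eq_some h
  have hcomm : Commute (sym k F a) (wordProd k F p) :=
    Commute.list_prod_right _ _ fun _ hx => by
      obtain ⟨e, he, rfl⟩ := List.mem_map.mp hx
      exact (hp e he).commute
  rw [wordProd_append, ← mul_assoc, hcomm.eq]
  simp [mul_assoc]

lemma cancel_eq_none_of_cancel_eq_some (hab : SymCommute F a b) (hb : cancel F b l = none)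
    (ha : cancel F a l = some l') : cancel F b l' = none := by
  induction l generalizing l' with
  | nil => simp at ha
  | cons c t ih =>
    have hcb : c ≠ symInv b := fun hc => by simp [cancel_cons_of_eq hc] at hb
    by_cases hca : c = symInv a
    · rw [cancel_cons_of_eq hca, Option.some_inj] at ha
      subst ha
      exact (cancel_cons_eq_none hcb).mp hb (by rw [hca]; exact hab.symm)
    obtain ⟨hac, t', ht', rfl⟩ := (cancel_cons_eq_some hca).mp ha
    exact (cancel_cons_eq_none hcb).mpr fun hbc => ih ((cancel_cons_eq_none hcb).mp hb hbc) ht'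

lemma cancel_cancel_of_symCommute (hab : SymCommute F a b) (hb : cancel F b l = some l₁)
    (ha : cancel F a l = some l₂) :
    ∃ m, cancel F a l₁ = some m ∧ cancel F b l₂ = some m := by
  induction l generalizing l₁ l₂ with
  | nil => simp at ha
  | cons c t ih =>
    by_cases hca : c = symInv a
    · have hcb : c ≠ symInv b := by rw [hca]; exact symInv_injective.ne hab.ne
      rw [cancel_cons_of_eq hca, Option.some_inj] at ha
      obtain ⟨-, t₁, ht₁, rfl⟩ := (cancel_cons_eq_some hcb).mp hb
      exact ⟨t₁, cancel_cons_of_eq hca, ha ▸ ht₁⟩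
    by_cases hcb : c = symInv b
    · rw [cancel_cons_of_eq hcb, Option.some_inj] at hb
      obtain ⟨-, t₂, ht₂, rfl⟩ := (cancel_cons_eq_some hca).mp ha
      exact ⟨t₂, hb ▸ ht₂, cancel_cons_of_eq hcb⟩
    obtain ⟨hac, t₂, ht₂, rfl⟩ := (cancel_cons_eq_some hca).mp ha
    obtain ⟨hbc, t₁, ht₁, rfl⟩ := (cancel_cons_eq_some hcb).mp hb
    obtain ⟨m, hm₁, hm₂⟩ := ih ht₁ ht₂
    exact ⟨c :: m, by simp [cancel_cons_of_symCommute hac, hm₁],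
      by simp [cancel_cons_of_symCommute hbc, hm₂]⟩

lemma symCommute_of_cancel_eq_some (hcd : c ≠ d) (hc : cancel F c l = some l₁)
    (hd : cancel F d l = some l₂) : SymCommute F c d := by
  induction l generalizing l₁ l₂ with
  | nil => simp at hc
  | cons e t ih =>
    by_cases hec : e = symInv c
    · have hed : e ≠ symInv d := by rw [hec]; exact symInv_injective.ne hcd
      obtain ⟨hde, -⟩ := (cancel_cons_eq_some hed).mp hd
      rw [hec] at hde
      exact hde.symm
    obtain ⟨hce, t₁, ht₁, rfl⟩ := (cancel_cons_eq_some hec).mp hc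
    by_cases hed : e = symInv d
    · rw [hed] at hce
      exact hce
    obtain ⟨-, t₂, ht₂, rfl⟩ := (cancel_cons_eq_some hed).mp hd
    exact ih ht₁ ht₂

noncomputable def insertCancel (F : Set (Sym2 (Fin k))) (a : Fin k × Bool)
    (l : List (Fin k × Bool)) : List (Fin k × Bool) :=
  (cancel F a l).getD (a :: l)

lemma insertCancel_of_cancel_eq_some (h : cancel F a l = some l') : insertCancel F a l = l' := by
  rw [insertCancel, h, Option.getD_some]

lemma insertCancel_of_cancel_eq_none (h : cancel F a l = none) :
    insertCancel F a l = a :: l := by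
  rw [insertCancel, h, Option.getD_none]

lemma wordProd_insertCancel (a : Fin k × Bool) (l : List (Fin k × Bool)) :
    wordProd k F (insertCancel F a l) = sym k F a * wordProd k F l := by
  cases hc : cancel F a l with
  | none => rw [insertCancel_of_cancel_eq_none hc, wordProd_cons]
  | some l' => rw [insertCancel_of_cancel_eq_some hc, sym_mul_wordProd_of_cancel_eq_some hc]

lemma length_insertCancel (a : Fin k × Bool) (l : List (Fin k × Bool)) :
    (insertCancel F a l).length = l.length + 1 ∨ (insertCancel F a l).length + 1 = l.length := by
  cases hc : cancel F a l with
  | none => left; rw [insertCancel_of_cancel_eq_none hc, List.length_cons]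
  | some l' => right; rw [insertCancel_of_cancel_eq_some hc, length_of_cancel_eq_some hc]

def IsReduced (F : Set (Sym2 (Fin k))) : List (Fin k × Bool) → Prop
  | [] => True
  | a :: t => cancel F a t = none ∧ IsReduced F t

lemma IsReduced.of_cancel_eq_some (hl : IsReduced F l) (h : cancel F a l = some l') :
    IsReduced F l' := by
  induction l generalizing l' with
  | nil => simp at h
  | cons b t ih =>
    obtain ⟨hbt, ht⟩ := hl
    by_cases hb : b = symInv a
    · rw [cancel_cons_of_eq hb, Option.some_inj] at h
      exact h ▸ ht
    obtain ⟨hab, t', ht', rfl⟩ := (cancel_cons_eq_some hb).mp h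
    exact ⟨cancel_eq_none_of_cancel_eq_some hab hbt ht', ih ht ht'⟩

lemma isReduced_insertCancel (hl : IsReduced F l) (a : Fin k × Bool) :
    IsReduced F (insertCancel F a l) := by
  cases hc : cancel F a l with
  | none => rw [insertCancel_of_cancel_eq_none hc]; exact ⟨hc, hl⟩
  | some l' => rw [insertCancel_of_cancel_eq_some hc]; exact hl.of_cancel_eq_some hc

lemma IsReduced.cancel_symInv_eq_none (hl : IsReduced F l) (h : cancel F a l = some l') :
    cancel F (symInv a) l' = none := by
  induction l generalizing l' with
  | nil => simp at h
  | cons e t ih =>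
    obtain ⟨het, ht⟩ := hl
    by_cases hea : e = symInv a
    · rw [cancel_cons_of_eq hea, Option.some_inj] at h
      rwa [← h, ← hea]
    obtain ⟨hae, t', ht', rfl⟩ := (cancel_cons_eq_some hea).mp h
    have he : e ≠ symInv (symInv a) := by rw [symInv_symInv]; exact hae.ne.symm
    exact (cancel_cons_eq_none he).mpr fun _ => ih ht ht'

end Cancel

section Swap

variable {a b : Fin k × Bool} {l l₁ l₂ p q : List (Fin k × Bool)}

inductive SwapStep (F : Set (Sym2 (Fin k))) : List (Fin k × Bool) → List (Fin k × Bool) → Prop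
  | swap (p q : List (Fin k × Bool)) {a b : Fin k × Bool} (h : SymCommute F a b) :
      SwapStep F (p ++ a :: b :: q) (p ++ b :: a :: q)

def SwapEquiv (F : Set (Sym2 (Fin k))) : List (Fin k × Bool) → List (Fin k × Bool) → Prop :=
  Relation.EqvGen (SwapStep F)

lemma SwapEquiv.refl (l : List (Fin k × Bool)) : SwapEquiv F l l := Relation.EqvGen.refl l

lemma SwapStep.swapEquiv (h : SwapStep F l₁ l₂) : SwapEquiv F l₁ l₂ := Relation.EqvGen.rel _ _ h

lemma SwapEquiv.trans (h₁ : SwapEquiv F l₁ l₂) (h₂ : SwapEquiv F l₂ q) : SwapEquiv F l₁ q :=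
  Relation.EqvGen.trans _ _ _ h₁ h₂

lemma SwapEquiv.eq_of_swapStep {β : Type*} {f : List (Fin k × Bool) → β}
    (hf : ∀ l₁ l₂, SwapStep F l₁ l₂ → f l₁ = f l₂) (h : SwapEquiv F l₁ l₂) : f l₁ = f l₂ := by
  induction h with
  | rel _ _ h => exact hf _ _ h
  | refl => rfl
  | symm _ _ _ ih => exact ih.symm
  | trans _ _ _ _ _ ih₁ ih₂ => exact ih₁.trans ih₂

lemma SwapEquiv.length_eq (h : SwapEquiv F l₁ l₂) : l₁.length = l₂.length :=
  h.eq_of_swapStep fun _ _ ⟨p, q, _⟩ => by simp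

lemma SwapEquiv.wordProd_eq (h : SwapEquiv F l₁ l₂) : wordProd k F l₁ = wordProd k F l₂ :=
  h.eq_of_swapStep fun _ _ ⟨p, q, hab⟩ => by simp [← mul_assoc, hab.commute.eq]

lemma SwapEquiv.cons (e : Fin k × Bool) (h : SwapEquiv F l₁ l₂) :
    SwapEquiv F (e :: l₁) (e :: l₂) := by
  induction h with
  | rel _ _ h =>
    obtain ⟨p, q, hab⟩ := h
    exact (SwapStep.swap (e :: p) q hab).swapEquiv
  | refl => exact .refl _
  | symm _ _ _ ih => exact .symm _ _ ih
  | trans _ _ _ _ _ ih₁ ih₂ => exact ih₁.trans ih₂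

lemma swapEquiv_cons_append (hp : ∀ e ∈ p, SymCommute F a e) :
    SwapEquiv F (a :: (p ++ q)) (p ++ a :: q) := by
  induction p with
  | nil => exact .refl _
  | cons e t ih =>
    simp only [List.mem_cons, forall_eq_or_imp] at hp
    exact (SwapStep.swap [] (t ++ q) hp.1).swapEquiv.trans ((ih hp.2).cons e)

lemma _root_.Option.Rel.map {α β γ δ : Type*} {r : α → β → Prop} {s : γ → δ → Prop}
    {f : α → γ} {g : β → δ} {o₁ : Option α} {o₂ : Option β} (h : Option.Rel r o₁ o₂)
    (hfg : ∀ a b, r a b → s (f a) (g b)) : Option.Rel s (o₁.map f) (o₂.map g) := by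
  cases h with
  | some h => exact .some (hfg _ _ h)
  | none => exact .none

lemma _root_.Option.Rel.getD {α β : Type*} {r : α → β → Prop} {o₁ : Option α} {o₂ : Option β}
    {d₁ : α} {d₂ : β} (h : Option.Rel r o₁ o₂) (hd : r d₁ d₂) : r (o₁.getD d₁) (o₂.getD d₂) := by
  cases h with
  | some h => exact h
  | none => exact hd

lemma rel_cancel_cons_cons {c d : Fin k × Bool} (hcd : SymCommute F c d) (a : Fin k × Bool)
    (q : List (Fin k × Bool)) :
    Option.Rel (SwapEquiv F) (cancel F a (c :: d :: q)) (cancel F a (d :: c :: q)) := by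
  by_cases hc : c = symInv a
  · have had : SymCommute F a d := by simpa [hc] using hcd
    rw [cancel_cons_of_eq hc, cancel_cons_of_symCommute had, cancel_cons_of_eq hc]
    exact .some (.refl _)
  by_cases hd : d = symInv a
  · have hac : SymCommute F a c := by simpa [hd] using hcd.symm
    rw [cancel_cons_of_eq hd, cancel_cons_of_symCommute hac, cancel_cons_of_eq hd]
    exact .some (.refl _)
  by_cases hac : SymCommute F a c
  · by_cases had : SymCommute F a d
    · simp only [cancel_cons_of_symCommute hac, cancel_cons_of_symCommute had, Option.map_map]
      cases cancel F a q with
      | none => exact .none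
      | some r => exact .some (SwapStep.swap [] r hcd).swapEquiv
    · rw [cancel_cons_of_symCommute hac, cancel_cons_of_not hd had, cancel_cons_of_not hd had,
        Option.map_none]
      exact .none
  · rw [cancel_cons_of_not hc hac, (cancel_cons_eq_none hd).mpr fun _ => cancel_cons_of_not hc hac]
    exact .none

lemma SwapStep.rel_cancel (h : SwapStep F l₁ l₂) (a : Fin k × Bool) :
    Option.Rel (SwapEquiv F) (cancel F a l₁) (cancel F a l₂) := by
  obtain ⟨p, q, hcd⟩ := h
  induction p with
  | nil => exact rel_cancel_cons_cons hcd a q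
  | cons e t ih =>
    simp only [List.cons_append]
    by_cases he : e = symInv a
    · rw [cancel_cons_of_eq he, cancel_cons_of_eq he]
      exact .some (SwapStep.swap t q hcd).swapEquiv
    by_cases hae : SymCommute F a e
    · rw [cancel_cons_of_symCommute hae, cancel_cons_of_symCommute hae]
      exact ih.map fun _ _ h => h.cons e
    · rw [cancel_cons_of_not he hae, cancel_cons_of_not he hae]
      exact .none

lemma SwapEquiv.insertCancel (h : SwapEquiv F l₁ l₂) (a : Fin k × Bool) :
    SwapEquiv F (insertCancel F a l₁) (insertCancel F a l₂) := by
  induction h with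
  | rel l₁ l₂ h => exact (h.rel_cancel a).getD (h.swapEquiv.cons a)
  | refl => exact .refl _
  | symm _ _ _ ih => exact .symm _ _ ih
  | trans _ _ _ _ _ ih₁ ih₂ => exact ih₁.trans ih₂

lemma IsReduced.insertCancel_insertCancel_symInv (hl : IsReduced F l) :
    SwapEquiv F (insertCancel F a (insertCancel F (symInv a) l)) l := by
  cases hc : cancel F (symInv a) l with
  | none =>
    rw [insertCancel_of_cancel_eq_none hc,
      insertCancel_of_cancel_eq_some (cancel_cons_of_eq rfl)]
    exact .refl l
  | some l₁ =>
    have hnone : cancel F a l₁ = none := by simpa using hl.cancel_symInv_eq_none hc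
    rw [insertCancel_of_cancel_eq_some hc, insertCancel_of_cancel_eq_none hnone]
    obtain ⟨p, q, rfl, rfl, hp⟩ := exists_eq_append_of_cancel_eq_some hc
    rw [symInv_symInv]
    exact swapEquiv_cons_append fun e he => symCommute_symInv_left.mp (hp e he)

lemma insertCancel_comm (hab : SymCommute F a b) (l : List (Fin k × Bool)) :
    SwapEquiv F (insertCancel F a (insertCancel F b l))
      (insertCancel F b (insertCancel F a l)) := by
  cases hb : cancel F b l with
  | none =>
    cases ha : cancel F a l with
    | none =>
      have hab' : cancel F a (b :: l) = none := by simp [cancel_cons_of_symCommute hab, ha]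
      have hba' : cancel F b (a :: l) = none := by simp [cancel_cons_of_symCommute hab.symm, hb]
      rw [insertCancel_of_cancel_eq_none hb, insertCancel_of_cancel_eq_none ha,
        insertCancel_of_cancel_eq_none hab', insertCancel_of_cancel_eq_none hba']
      exact (SwapStep.swap [] l hab).swapEquiv
    | some l₂ =>
      have hab' : cancel F a (b :: l) = some (b :: l₂) := by
        simp [cancel_cons_of_symCommute hab, ha]
      rw [insertCancel_of_cancel_eq_none hb, insertCancel_of_cancel_eq_some ha,
        insertCancel_of_cancel_eq_some hab',
        insertCancel_of_cancel_eq_none (cancel_eq_none_of_cancel_eq_some hab hb ha)]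
      exact .refl _
  | some l₁ =>
    cases ha : cancel F a l with
    | none =>
      have hba' : cancel F b (a :: l) = some (a :: l₁) := by
        simp [cancel_cons_of_symCommute hab.symm, hb]
      rw [insertCancel_of_cancel_eq_some hb, insertCancel_of_cancel_eq_none ha,
        insertCancel_of_cancel_eq_some hba',
        insertCancel_of_cancel_eq_none (cancel_eq_none_of_cancel_eq_some hab.symm ha hb)]
      exact .refl _
    | some l₂ =>
      obtain ⟨m, hm₁, hm₂⟩ := cancel_cancel_of_symCommute hab hb ha
      rw [insertCancel_of_cancel_eq_some hb, insertCancel_of_cancel_eq_some ha,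
        insertCancel_of_cancel_eq_some hm₁, insertCancel_of_cancel_eq_some hm₂]
      exact .refl _

end Swap

section Trace

variable (k F) in
def ReducedWord : Type := {l : List (Fin k × Bool) // IsReduced F l}

instance ReducedWord.setoid : Setoid (ReducedWord k F) :=
  (Relation.EqvGen.setoid (SwapStep F)).comap Subtype.val

variable (k F) in
def Trace : Type := Quotient (ReducedWord.setoid (k := k) (F := F))

namespace Trace

variable {a b : Fin k × Bool}

noncomputable def insertCancel (a : Fin k × Bool) : Trace k F → Trace k F :=
  Quotient.map (fun l => ⟨GraphGroupPaper.insertCancel F a l.1, isReduced_insertCancel l.2 a⟩)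
    fun _ _ h => SwapEquiv.insertCancel h a

lemma insertCancel_mk (a : Fin k × Bool) (l : ReducedWord k F) :
    insertCancel a ⟦l⟧ = ⟦⟨GraphGroupPaper.insertCancel F a l.1, isReduced_insertCancel l.2 a⟩⟧ :=
  rfl

lemma insertCancel_insertCancel_symInv (a : Fin k × Bool) (q : Trace k F) :
    insertCancel a (insertCancel (symInv a) q) = q :=
  Quotient.inductionOn q fun l => Quotient.sound l.2.insertCancel_insertCancel_symInv

lemma insertCancel_comm (hab : SymCommute F a b) (q : Trace k F) :
    insertCancel a (insertCancel b q) = insertCancel b (insertCancel a q) :=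
  Quotient.inductionOn q fun l => Quotient.sound (GraphGroupPaper.insertCancel_comm hab l.1)

noncomputable def insertCancelPerm (a : Fin k × Bool) : Equiv.Perm (Trace k F) where
  toFun := insertCancel a
  invFun := insertCancel (symInv a)
  left_inv q := by simpa using insertCancel_insertCancel_symInv (symInv a) q
  right_inv := insertCancel_insertCancel_symInv a

noncomputable def length : Trace k F → ℕ :=
  Quotient.lift (fun l => l.1.length) fun _ _ h => SwapEquiv.length_eq h

noncomputable def prod : Trace k F → Grp k F :=
  Quotient.lift (fun l => wordProd k F l.1) fun _ _ h => SwapEquiv.wordProd_eq h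

lemma prod_insertCancel (a : Fin k × Bool) (q : Trace k F) :
    (insertCancel a q).prod = sym k F a * q.prod :=
  Quotient.inductionOn q fun l => wordProd_insertCancel a l.1

lemma length_insertCancel_le (a : Fin k × Bool) (q : Trace k F) :
    (insertCancel a q).length ≤ q.length + 1 :=
  Quotient.inductionOn q fun l => by
    show (GraphGroupPaper.insertCancel F a l.1).length ≤ l.1.length + 1
    rcases length_insertCancel (F := F) a l.1 with h | h <;> omega

end Trace

noncomputable def traceAction : Grp k F →* Equiv.Perm (Trace k F) :=
  PresentedGroup.toGroup (f := fun i => Trace.insertCancelPerm (i, true)) <| by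
    rintro r ⟨i, j, hij, hF, rfl⟩
    have hcomm : Commute (Trace.insertCancelPerm (F := F) (i, true))
        (Trace.insertCancelPerm (j, true)) :=
      Equiv.ext fun q => Trace.insertCancel_comm ⟨hij, hF⟩ q
    simp only [map_mul, map_inv, FreeGroup.lift_apply_of, hcomm.eq]
    group

lemma traceAction_sym (a : Fin k × Bool) :
    traceAction (sym k F a) = Trace.insertCancelPerm a := by
  have hgen : traceAction (gen k F a.1) = Trace.insertCancelPerm (a.1, true) :=
    PresentedGroup.toGroup.of _
  cases a with | mk i b =>
  cases b
  · rw [sym, if_neg Bool.false_ne_true, map_inv, hgen]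
    rfl
  · exact hgen

noncomputable def normalForm (x : Grp k F) : Trace k F := traceAction x ⟦⟨[], trivial⟩⟧

lemma normalForm_sym_mul (a : Fin k × Bool) (x : Grp k F) :
    normalForm (sym k F a * x) = (normalForm x).insertCancel a := by
  rw [normalForm, map_mul, traceAction_sym]
  rfl

lemma prod_normalForm (x : Grp k F) : (normalForm x).prod = x := by
  obtain ⟨l, rfl⟩ := exists_wordProd_eq x
  induction l with
  | nil => rfl
  | cons a t ih => rw [wordProd_cons, normalForm_sym_mul, Trace.prod_insertCancel, ih]

lemma length_normalForm_wordProd_le (l : List (Fin k × Bool)) :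
    (normalForm (wordProd k F l)).length ≤ l.length := by
  induction l with
  | nil => exact le_rfl
  | cons a t ih =>
    rw [wordProd_cons, normalForm_sym_mul]
    exact (Trace.length_insertCancel_le a _).trans (Nat.succ_le_succ ih)

lemma len_eq_length_normalForm (x : Grp k F) : len x = (normalForm x).length := by
  obtain ⟨l, rfl, hl⟩ := exists_minWord x
  refine le_antisymm ?_ (hl ▸ length_normalForm_wordProd_le l)
  obtain ⟨w, hw⟩ := Quotient.exists_rep (normalForm (wordProd k F l))
  have hprod := prod_normalForm (wordProd k F l)
  rw [← hw] at hprod ⊢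
  exact len_le_length hprod

end Trace

section InitialLetters

variable {a b : Fin k × Bool} {x : Grp k F}

lemma startsWith_iff_isSome_cancel {w : ReducedWord k F} (hw : normalForm x = ⟦w⟧) :
    StartsWith a x ↔ (cancel F (symInv a) w.1).isSome := by
  have hlen : len ((sym k F a)⁻¹ * x) = (insertCancel F (symInv a) w.1).length := by
    rw [← sym_symInv, len_eq_length_normalForm, normalForm_sym_mul, hw]
    rfl
  have hx : len x = w.1.length := by rw [len_eq_length_normalForm, hw]; rfl
  rw [startsWith_iff, hlen, hx]
  cases hc : cancel F (symInv a) w.1 with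
  | none => simp [insertCancel_of_cancel_eq_none hc]; omega
  | some l' => simp [insertCancel_of_cancel_eq_some hc, length_of_cancel_eq_some hc]

lemma StartsWith.symCommute (ha : StartsWith a x) (hb : StartsWith b x) (hab : a ≠ b) :
    SymCommute F a b := by
  obtain ⟨w, hw⟩ := Quotient.exists_rep (normalForm x)
  obtain ⟨l₁, hl₁⟩ := Option.isSome_iff_exists.mp ((startsWith_iff_isSome_cancel hw.symm).mp ha)
  obtain ⟨l₂, hl₂⟩ := Option.isSome_iff_exists.mp ((startsWith_iff_isSome_cancel hw.symm).mp hb)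
  simpa using symCommute_of_cancel_eq_some (symInv_injective.ne hab) hl₁ hl₂

lemma StartsWith.inv_mul (ha : StartsWith a x) (hb : StartsWith b x) (hab : a ≠ b) :
    StartsWith b ((sym k F a)⁻¹ * x) := by
  obtain ⟨w, hw⟩ := Quotient.exists_rep (normalForm x)
  obtain ⟨l₁, hl₁⟩ := Option.isSome_iff_exists.mp ((startsWith_iff_isSome_cancel hw.symm).mp ha)
  obtain ⟨l₂, hl₂⟩ := Option.isSome_iff_exists.mp ((startsWith_iff_isSome_cancel hw.symm).mp hb)
  obtain ⟨m, hm, -⟩ :=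
    cancel_cancel_of_symCommute (by simpa using (ha.symCommute hb hab).symm) hl₁ hl₂
  have hw₁ : normalForm ((sym k F a)⁻¹ * x) = ⟦⟨l₁, w.2.of_cancel_eq_some hl₁⟩⟧ := by
    rw [← sym_symInv, normalForm_sym_mul, ← hw, Trace.insertCancel_mk]
    exact congrArg _ (Subtype.ext (insertCancel_of_cancel_eq_some hl₁))
  simp [startsWith_iff_isSome_cancel hw₁, hm]

end InitialLetters

section Lattice

variable {α β γ : Fin k × Bool} {a b c d j t u v w x y : Grp k F}

lemma StartsWith.of_inv_mul (hα : StartsWith α ((sym k F β)⁻¹ * x)) (hβ : StartsWith β x)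
    (hc : SymCommute F α β) : StartsWith α x := by
  have hle := hβ.mul_le hα
  have hlen := hβ.len_mul hα
  rw [← hc.commute.eq] at hle hlen
  refine le.trans ?_ hle
  unfold le
  rw [hlen, inv_mul_cancel_left, add_comm]

lemma StartsWith.sym_mul (hβ : StartsWith β t) (hα : StartsWith α u)
    (ht : le t ((sym k F α)⁻¹ * u)) (hc : SymCommute F α β) : StartsWith β (sym k F α * t) := by
  by_contra h
  have h₁ := len_inv_mul_of_not_startsWith h
  have h₂ := hα.len_mul ht
  have h₃ := len_mul_le (sym k F α) ((sym k F β)⁻¹ * t)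
  rw [← hc.inv_mul_sym_mul, len_sym] at h₃
  rw [len_sym] at h₂
  have := startsWith_iff.mp hβ
  omega

lemma le_inv_mul_of_not_startsWith (hxj : le x j) (hα : StartsWith α j)
    (hnx : ¬ StartsWith α x) : le x ((sym k F α)⁻¹ * j) := by
  generalize hn : len x = n
  induction n using Nat.strong_induction_on generalizing x j with
  | _ n ih =>
  obtain rfl | hx1 := eq_or_ne x 1
  · exact one_le _
  obtain ⟨β, hβ⟩ := exists_startsWith hx1
  have hβα : β ≠ α := fun he => hnx (he ▸ hβ)
  have hβj := hβ.of_le hxj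
  have hcomm := hα.symCommute hβj hβα.symm
  have IH := ih _ (by have := startsWith_iff.mp hβ; omega) (hβ.inv_mul_le_inv_mul hxj)
    (hβj.inv_mul hα hβα) (fun h => hnx (h.of_inv_mul hβ hcomm)) rfl
  rw [hcomm.inv_mul_inv_mul] at IH
  simpa using (hα.inv_mul hβj hβα.symm).mul_le IH

lemma le_sym_mul_of_not_startsWith (hbu : le b u) (hα : StartsWith α u)
    (hnb : ¬ StartsWith α b) (hbt : le b t) (ht : le t ((sym k F α)⁻¹ * u)) :
    le b (sym k F α * t) := by
  generalize hn : len b = n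
  induction n using Nat.strong_induction_on generalizing b t u with
  | _ n ih =>
  obtain rfl | hb1 := eq_or_ne b 1
  · exact one_le _
  obtain ⟨β, hβ⟩ := exists_startsWith hb1
  have hβα : β ≠ α := fun he => hnb (he ▸ hβ)
  have hβu := hβ.of_le hbu
  have hβt := hβ.of_le hbt
  have hcomm := hα.symCommute hβu hβα.symm
  have ht' : le ((sym k F β)⁻¹ * t) ((sym k F α)⁻¹ * ((sym k F β)⁻¹ * u)) := by
    rw [hcomm.inv_mul_inv_mul]
    exact hβt.inv_mul_le_inv_mul ht
  have IH := ih _ (by have := startsWith_iff.mp hβ; omega) (hβ.inv_mul_le_inv_mul hbu)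
    (hβu.inv_mul hα hβα) (fun h => hnb (h.of_inv_mul hβ hcomm)) (hβ.inv_mul_le_inv_mul hbt) ht' rfl
  rw [← hcomm.inv_mul_sym_mul] at IH
  simpa using (hβt.sym_mul hα ht hcomm).mul_le IH

lemma isMeet_one_iff : IsMeet a b 1 ↔ ∀ γ, ¬ (StartsWith γ a ∧ StartsWith γ b) := by
  refine ⟨fun h γ hγ => sym_ne_one γ (le_one_iff.mp (h.2.2 _ hγ.1 hγ.2)),
    fun h => ⟨one_le a, one_le b, fun v hva hvb => ?_⟩⟩
  obtain rfl | hv := eq_or_ne v 1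
  · exact le.refl 1
  obtain ⟨β, hβ⟩ := exists_startsWith hv
  exact absurd ⟨hβ.of_le hva, hβ.of_le hvb⟩ (h β)

lemma IsMeet.sym_mul (hw : IsMeet ((sym k F γ)⁻¹ * a) ((sym k F γ)⁻¹ * b) w)
    (ha : StartsWith γ a) (hb : StartsWith γ b) : IsMeet a b (sym k F γ * w) := by
  obtain ⟨hwa, hwb, hw⟩ := hw
  refine ⟨ha.mul_le hwa, hb.mul_le hwb, fun v hva hvb => ?_⟩
  by_cases hγv : StartsWith γ v
  · refine le_of_inv_mul_le_inv_mul hγv (ha.le_mul hwa) ?_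
    rw [inv_mul_cancel_left]
    exact hw _ (hγv.inv_mul_le_inv_mul hva) (hγv.inv_mul_le_inv_mul hvb)
  · exact le_sym_mul_of_not_startsWith hva ha hγv
      (hw _ (le_inv_mul_of_not_startsWith hva ha hγv) (le_inv_mul_of_not_startsWith hvb hb hγv)) hwa

lemma exists_isMeet (a b : Grp k F) : ∃ w, IsMeet a b w := by
  generalize hn : len a + len b = n
  induction n using Nat.strong_induction_on generalizing a b with
  | _ n ih =>
  by_cases hc : ∃ γ, StartsWith γ a ∧ StartsWith γ b
  · obtain ⟨γ, hγa, hγb⟩ := hc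
    have := startsWith_iff.mp hγa
    have := startsWith_iff.mp hγb
    obtain ⟨w, hw⟩ := ih _ (by omega) ((sym k F γ)⁻¹ * a) ((sym k F γ)⁻¹ * b) rfl
    exact ⟨_, hw.sym_mul hγa hγb⟩
  · exact ⟨1, isMeet_one_iff.mpr fun γ hγ => hc ⟨γ, hγ⟩⟩

lemma IsMeet.inv_mul (hw : IsMeet a b w) (hca : le c a) (hcb : le c b) :
    IsMeet (c⁻¹ * a) (c⁻¹ * b) (c⁻¹ * w) := by
  have hcw := hw.2.2 c hca hcb
  refine ⟨hcw.inv_mul_le_inv_mul hw.1, hcw.inv_mul_le_inv_mul hw.2.1, fun v hva hvb => ?_⟩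
  have := (hca.le_mul hva).inv_mul_le_inv_mul (hw.2.2 _ (hca.mul_le hva) (hcb.mul_le hvb))
  rwa [inv_mul_cancel_left] at this

lemma len_inv_mul_of_isMeet_one (h : IsMeet a b 1) : len (a⁻¹ * b) = len a + len b := by
  rw [isMeet_one_iff] at h
  generalize hn : len a = n
  induction n using Nat.strong_induction_on generalizing a b with
  | _ n ih =>
  obtain rfl | ha1 := eq_or_ne a 1
  · simp [← hn]
  obtain ⟨α, hα⟩ := exists_startsWith ha1
  have hlb := len_inv_mul_of_not_startsWith fun hb => h α ⟨hα, hb⟩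
  have hla := startsWith_iff.mp hα
  have hαb : StartsWith (symInv α) ((sym k F α)⁻¹ * b) :=
    startsWith_iff.mpr (by simp [hlb])
  have h' : ∀ β, ¬ (StartsWith β ((sym k F α)⁻¹ * a) ∧ StartsWith β ((sym k F α)⁻¹ * b)) := by
    rintro β ⟨hβa, hβb⟩
    obtain rfl | hβ := eq_or_ne β (symInv α)
    · have := startsWith_iff.mp hβa
      simp only [sym_symInv, inv_inv, mul_inv_cancel_left] at this
      omega
    have hcomm : SymCommute F β α := (hαb.symCommute hβb hβ.symm).symm
    have hβb' := hαb.inv_mul hβb hβ.symm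
    simp only [sym_symInv, inv_inv, mul_inv_cancel_left] at hβb'
    exact h β ⟨hβa.of_inv_mul hα hcomm, hβb'⟩
  have IH := ih _ (by omega) h' rfl
  rw [mul_inv_rev, inv_inv, mul_assoc, mul_inv_cancel_left] at IH
  omega

lemma IsMeet.len_inv_mul (h : IsMeet a b w) : len (a⁻¹ * b) + 2 * len w = len a + len b := by
  have h₁ := len_inv_mul_of_isMeet_one (by simpa using h.inv_mul h.1 h.2.1)
  rw [mul_inv_rev, inv_inv, mul_assoc, mul_inv_cancel_left, h.1.len_inv_mul,
    h.2.1.len_inv_mul] at h₁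
  have := h.1.len_le
  have := h.2.1.len_le
  omega

lemma IsMeet.inv_mul_le_inv_mul (h : IsMeet a b w) : le (a⁻¹ * w) (a⁻¹ * b) := by
  have := h.len_inv_mul
  have := h.1.len_inv_mul_rev
  have := h.2.1.len_inv_mul
  have := h.1.len_le
  have := h.2.1.len_le
  unfold le
  rw [mul_inv_rev, inv_inv, mul_assoc, mul_inv_cancel_left]
  omega

lemma exists_isJoin_le (ha : le a c) (hb : le b c) : ∃ j, IsJoin a b j ∧ le j c := by
  obtain ⟨w, hw⟩ := exists_isMeet (c⁻¹ * a) (c⁻¹ * b)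
  have hwc := hw.1.trans ha.inv_mul_le_inv
  refine ⟨c * w, ⟨?_, ?_, fun v hav hbv => ?_⟩, mul_le_of_le_inv hwc⟩
  · simpa using hw.1.inv_mul_antitone ha.inv_mul_le_inv
  · simpa using hw.2.1.inv_mul_antitone hb.inv_mul_le_inv
  · obtain ⟨t, ht⟩ := exists_isMeet c v
    have h := (hw.2.2 _ ((ht.2.2 a ha hav).inv_mul_antitone ht.1)
      ((ht.2.2 b hb hbv).inv_mul_antitone ht.1)).inv_mul_antitone hwc
    simp only [inv_inv, mul_inv_cancel_left] at h
    exact h.trans ht.2.1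

lemma IsJoin.unique (h : IsJoin a b j) (h' : IsJoin a b v) : j = v :=
  le.antisymm (h.2.2 v h'.1 h'.2.1) (h'.2.2 j h.1 h.2.1)

lemma IsJoin.inv_mul (hj : IsJoin a b j) (hca : le c a) (hcb : le c b) :
    IsJoin (c⁻¹ * a) (c⁻¹ * b) (c⁻¹ * j) := by
  have hcj := hca.trans hj.1
  refine ⟨hca.inv_mul_le_inv_mul hj.1, hcb.inv_mul_le_inv_mul hj.2.1, fun v hav hbv => ?_⟩
  obtain ⟨t, ht⟩ := exists_isMeet (c⁻¹ * j) v
  have hct := hcj.le_mul ht.1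
  have hle : ∀ {e}, le c e → le e j → le (c⁻¹ * e) v → le e (c * t) := fun hce hej hev =>
    le_of_inv_mul_le_inv_mul hce hct
      (by rw [inv_mul_cancel_left]; exact ht.2.2 _ (hce.inv_mul_le_inv_mul hej) hev)
  have := hcj.inv_mul_le_inv_mul (hj.2.2 _ (hle hca hj.1 hav) (hle hcb hj.2.1 hbv))
  rw [inv_mul_cancel_left] at this
  exact this.trans ht.2.1

lemma IsJoin.absorb {j' : Grp k F} (hj : IsJoin a b j) (hbc : IsJoin b c j') (hca : le c a) :
    IsJoin a j' j :=
  ⟨hj.1, hbc.2.2 j hj.2.1 (hca.trans hj.1), fun v hav hjv => hj.2.2 v hav (hbc.1.trans hjv)⟩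

lemma IsMeet.inv_mul_right_of_isMeet_one (hm : IsMeet b c 1) (hα : StartsWith α c)
    (hbj : le b j) (hαj : StartsWith α j) : IsMeet b ((sym k F α)⁻¹ * c) 1 := by
  rw [isMeet_one_iff] at hm ⊢
  rintro β ⟨hβb, hβc⟩
  obtain rfl | hβα := eq_or_ne β α
  · exact hm β ⟨hβb, hα⟩
  exact hm β ⟨hβb, hβc.of_inv_mul hα (hαj.symCommute (hβb.of_le hbj) hβα.symm).symm⟩

lemma IsJoin.inv_mul_eq_of_isMeet_one (hj : IsJoin b c j) (hm : IsMeet b c 1) :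
    c⁻¹ * j = b := by
  generalize hn : len c = n
  induction n using Nat.strong_induction_on generalizing b c j with
  | _ n ih =>
  obtain rfl | hc1 := eq_or_ne c 1
  · rw [inv_one, one_mul]
    exact hj.unique ⟨le.refl b, one_le b, fun _ hb _ => hb⟩
  obtain ⟨α, hα⟩ := exists_startsWith hc1
  have hαj := hα.of_le hj.2.1
  have hαb : ¬ StartsWith α b := fun h => isMeet_one_iff.mp hm α ⟨h, hα⟩
  obtain ⟨t, ht, htj⟩ :=
    exists_isJoin_le (le_inv_mul_of_not_startsWith hj.1 hαj hαb) (hα.inv_mul_le_inv_mul hj.2.1)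
  have hct : le c (sym k F α * t) :=
    le_of_inv_mul_le_inv_mul hα (hαj.le_mul htj) (by rw [inv_mul_cancel_left]; exact ht.2.1)
  have hαt : sym k F α * t = j :=
    le.antisymm (hαj.mul_le htj)
      (hj.2.2 _ (le_sym_mul_of_not_startsWith hj.1 hαj hαb ht.1 htj) hct)
  have IH := ih _ (by have := startsWith_iff.mp hα; omega) ht
    (hm.inv_mul_right_of_isMeet_one hα hj.1 hαj) rfl
  rw [← hαt, ← IH]
  group

/-- The diamond identity `c⁻¹ (b ∨ c) = (b ∧ c)⁻¹ b`. -/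
lemma IsJoin.inv_mul_eq (hj : IsJoin b c j) (hm : IsMeet b c d) : c⁻¹ * j = d⁻¹ * b := by
  have h := (hj.inv_mul hm.1 hm.2.1).inv_mul_eq_of_isMeet_one
    (by simpa using hm.inv_mul hm.1 hm.2.1)
  rw [← h]
  group

end Lattice

section Translates

variable {H : Set (Grp k F)} {d h m m' w x y : Grp k F}

lemma le_of_minimalIn_image_mul (hdown : ∀ a ∈ H, ∀ b, le b a → b ∈ H)
    (hm : MinimalIn ((x * ·) '' H) m) : le m x := by
  obtain ⟨v, hv⟩ := exists_isMeet x m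
  have hvH : x⁻¹ * v ∈ H := by
    rw [Set.image_mul_left] at hm
    exact hdown _ hm.1 _ hv.inv_mul_le_inv_mul
  exact hm.2 v ⟨_, hvH, mul_inv_cancel_left x v⟩ hv.2.1 ▸ hv.1

lemma inv_mul_mem_of_le (hdown : ∀ a ∈ H⁻¹, ∀ b, le b a → b ∈ H⁻¹) (hh : h ∈ H) (hd : le d h) :
    d⁻¹ * h ∈ H := by
  simpa using hdown h⁻¹ (by simpa using hh) _ hd.inv_mul_le_inv

/-- `z ↦ y⁻¹ z` reverses the order on the elements below `y`, so it turns meets into joins. -/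
lemma IsMeet.isJoin_inv_mul (hw : IsMeet m m' w) (hmy : le m y) (hm'y : le m' y) :
    IsJoin (y⁻¹ * m) (y⁻¹ * m') (y⁻¹ * w) := by
  have hwy := hw.1.trans hmy
  refine ⟨hw.1.inv_mul_antitone hmy, hw.2.1.inv_mul_antitone hm'y, fun v hmv hm'v => ?_⟩
  obtain ⟨v', hv'⟩ := exists_isMeet v (y⁻¹ * w)
  have hv'y : le v' y⁻¹ := hv'.2.1.trans hwy.inv_mul_le_inv
  have hym := (hv'.2.2 _ hmv (hw.1.inv_mul_antitone hmy)).inv_mul_antitone hv'y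
  have hym' := (hv'.2.2 _ hm'v (hw.2.1.inv_mul_antitone hm'y)).inv_mul_antitone hv'y
  simp only [inv_inv, mul_inv_cancel_left] at hym hym'
  have := (hw.2.2 _ hym hym').inv_mul_antitone hwy
  rw [inv_mul_cancel_left] at this
  exact this.trans hv'.1

/-- `y⁻¹ w` is the join of `y⁻¹ m` and `y⁻¹ m' ∨ y⁻¹ x`; translating by `(y⁻¹ x)⁻¹` and applying
the diamond identity to `y⁻¹ m' ∨ y⁻¹ x` gives the claim. -/
lemma IsMeet.isJoin_inv_mul_of_isMeet (hw : IsMeet m m' w) (hd : IsMeet (y⁻¹ * m') (y⁻¹ * x) d)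
    (hmx : le m x) (hxy : le x y) (hm'y : le m' y) :
    IsJoin (x⁻¹ * m) (d⁻¹ * (y⁻¹ * m')) (x⁻¹ * w) := by
  obtain ⟨j, hj, -⟩ := exists_isJoin_le hm'y.inv_mul_le_inv hxy.inv_mul_le_inv
  have hxm := hmx.inv_mul_antitone hxy
  have h := ((hw.isJoin_inv_mul (hmx.trans hxy) hm'y).absorb hj hxm).inv_mul hxm hj.2.1
  rw [hj.inv_mul_eq hd] at h
  simpa [mul_assoc] using h

end Translates

theorem stmt9_general {k : ℕ} {F : Set (Sym2 (Fin k))}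
    (H : Set (Grp k F)) (hH : ClosedSet H) (x y : Grp k F) (hxy : le x y)
    (m m' : Grp k F)
    (hm : MinimalIn ((x * ·) '' H) m) (hm' : MinimalIn ((y * ·) '' H) m') :
    le m m' := by
  obtain ⟨⟨-, hdown, hjoin⟩, -, hdown', -⟩ := hH
  have hmx := le_of_minimalIn_image_mul hdown hm
  have hm'y := le_of_minimalIn_image_mul hdown hm'
  have hxm : x⁻¹ * m ∈ H := by rw [Set.image_mul_left] at hm; exact hm.1
  have hym' : y⁻¹ * m' ∈ H := by rw [Set.image_mul_left] at hm'; exact hm'.1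
  obtain ⟨w, hw⟩ := exists_isMeet m m'
  obtain ⟨d, hd⟩ := exists_isMeet (y⁻¹ * m') (y⁻¹ * x)
  have hwH : x⁻¹ * w ∈ H := hjoin _ hxm _ (inv_mul_mem_of_le hdown' hym' hd.1) _
    (hw.isJoin_inv_mul_of_isMeet hd hmx hxy hm'y)
  exact hm.2 w ⟨_, hwH, mul_inv_cancel_left x w⟩ hw.1 ▸ hw.2.1

/-- for closed `H`, `x ≤ y` implies `min(xH) ≤ min(yH)`. -/
theorem stmt9 {k : ℕ} (hk : 1 ≤ k) {F : Set (Sym2 (Fin k))}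
    (H : Set (Grp k F)) (hH : ClosedSet H) (x y : Grp k F) (hxy : le x y)
    (m m' : Grp k F)
    (hm : MinimalIn ((x * ·) '' H) m) (hm' : MinimalIn ((y * ·) '' H) m') :
    le m m' :=
  stmt9_general H hH x y hxy m m' hm hm'

end GraphGroupPaper
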